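/- arXiv:2304.13522 — 6 statements merged into one kernel-verified Lean document; each statement's English description precedes it below -/
import Mathlib

section
/- Sequential composition is not left-distributive over union: if a, b, c are three distinct atoms in A, then for P = {a ← {b,c}}, Q = {b ← ∅}, R = {c ← ∅} one has P ∘ (Q ∪ R) = {a ← ∅} while (P ∘ Q) ∪ (P ∘ R) = ∅, so P ∘ (Q ∪ R) ≠ (P ∘ Q) ∪ (P ∘ R). -/
/-- A rule `h ← B` over the alphabet `A`: a head atom paired with a finite body. -/
abbrev Rule (A : Type*) := A × Finset A

/-- The heads `h(S)` of a set of rules. -/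
def heads {A : Type*} [DecidableEq A] (S : Finset (Rule A)) : Finset A := S.image Prod.fst

/-- The bodies `b(S)` of a set of rules. -/
def bodies {A : Type*} [DecidableEq A] (S : Finset (Rule A)) : Finset A := S.biUnion Prod.snd

/-- Sequential composition:
`P ∘ R = { h(r) ← b(S) : r ∈ P, S ⊆ R, |S| ≤ sz(r), h(S) = b(r) }`. -/
def comp {A : Type*} [DecidableEq A] (P R : Finset (Rule A)) : Finset (Rule A) :=
  P.biUnion fun r =>
    (R.powerset.filter fun S => S.card ≤ r.2.card ∧ heads S = r.2).image
      fun S => (r.1, bodies S)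

lemma mem_comp_singleton {A : Type*} [DecidableEq A] (r : Rule A) (R : Finset (Rule A))
    (x : Rule A) :
    x ∈ comp {r} R ↔ ∃ S, S ⊆ R ∧ S.card ≤ r.2.card ∧ heads S = r.2 ∧ x = (r.1, bodies S) := by
  simp only [comp, Finset.singleton_biUnion, Finset.mem_image, Finset.mem_filter,
    Finset.mem_powerset]
  constructor
  · rintro ⟨S, ⟨hS, h1, h2⟩, rfl⟩
    exact ⟨S, hS, h1, h2, rfl⟩
  · rintro ⟨S, hS, h1, h2, rfl⟩
    exact ⟨S, ⟨hS, h1, h2⟩, rfl⟩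

/-- Sequential composition is not left-distributive over union: for distinct atoms
`a, b, c`, with `P = {a ← {b,c}}`, `Q = {b ← ∅}` and `R = {c ← ∅}` one has
`P ∘ (Q ∪ R) = {a ← ∅}` while `(P ∘ Q) ∪ (P ∘ R) = ∅`, so the two differ. -/
theorem comp_not_left_distrib {A : Type*} [DecidableEq A] [Fintype A]
    {a b c : A} (hab : a ≠ b) (hac : a ≠ c) (hbc : b ≠ c) :
    comp {(a, ({b, c} : Finset A))} ({(b, (∅ : Finset A))} ∪ {(c, (∅ : Finset A))})
        = {(a, (∅ : Finset A))} ∧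
    comp {(a, ({b, c} : Finset A))} {(b, (∅ : Finset A))}
        ∪ comp {(a, ({b, c} : Finset A))} {(c, (∅ : Finset A))} = ∅ ∧
    comp {(a, ({b, c} : Finset A))} ({(b, (∅ : Finset A))} ∪ {(c, (∅ : Finset A))})
        ≠ comp {(a, ({b, c} : Finset A))} {(b, (∅ : Finset A))}
          ∪ comp {(a, ({b, c} : Finset A))} {(c, (∅ : Finset A))} := by
  
  -- key fact: any rule in Q∪R etc. has empty body
  have hbodies : ∀ S : Finset (Rule A),
      S ⊆ ({(b, (∅ : Finset A))} ∪ {(c, ∅)}) → bodies S = ∅ := by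
    intro S hS
    apply Finset.eq_empty_of_forall_notMem
    intro x hx
    simp only [bodies, Finset.mem_biUnion] at hx
    obtain ⟨s, hs, hxs⟩ := hx
    have := hS hs
    simp only [Finset.mem_union, Finset.mem_singleton] at this
    rcases this with h | h <;> subst h <;> simp at hxs
  have hempty : ∀ d : A, d ∈ ({b, c} : Finset A) →
      comp {(a, ({b, c} : Finset A))} {(d, (∅ : Finset A))} = ∅ := by
    intro d hd
    apply Finset.eq_empty_of_forall_notMem
    intro x hx
    rw [mem_comp_singleton] at hx
    obtain ⟨S, hS, _, hheads, _⟩ := hx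
    -- heads S ⊆ {d} but heads S = {b,c}, contradiction since b ≠ c
    have hsub : heads S ⊆ {d} := by
      intro y hy
      simp only [heads, Finset.mem_image] at hy
      obtain ⟨s, hs, rfl⟩ := hy
      have := hS hs
      simp only [Finset.mem_singleton] at this
      subst this
      simp
    rw [hheads] at hsub
    have hb := hsub (by simp : b ∈ ({b,c} : Finset A))
    have hc := hsub (by simp : c ∈ ({b,c} : Finset A))
    simp only [Finset.mem_singleton] at hb hc
    exact hbc (hb.trans hc.symm)
  have main : comp {(a, ({b, c} : Finset A))} ({(b, (∅ : Finset A))} ∪ {(c, (∅ : Finset A))})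
      = {(a, (∅ : Finset A))} := by
    ext x
    rw [mem_comp_singleton, Finset.mem_singleton]
    constructor
    · rintro ⟨S, hS, _, _, rfl⟩
      rw [hbodies S hS]
    · rintro rfl
      refine ⟨({(b, ∅), (c, ∅)} : Finset (Rule A)), ?_, ?_, ?_, ?_⟩
      · intro x hx
        simp only [Finset.mem_insert, Finset.mem_singleton] at hx
        rcases hx with rfl | rfl <;> simp
      · have h2 : ({b,c} : Finset A).card = 2 := by
          rw [Finset.card_insert_of_notMem (by simp [hbc])]; rfl
        rw [h2]
        exact le_trans (Finset.card_insert_le _ _) (by simp)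
      · simp [heads, Finset.image_insert]
      · have : bodies ({(b, (∅:Finset A)), (c, ∅)} : Finset (Rule A)) = ∅ := by
          apply hbodies
          intro x hx
          simp only [Finset.mem_insert, Finset.mem_singleton] at hx
          rcases hx with rfl | rfl <;> simp
        rw [this]
  have hb' := hempty b (by simp)
  have hc' := hempty c (by simp)
  refine ⟨main, by rw [hb', hc']; simp, ?_⟩
  rw [main, hb', hc']
  simp
end

section
/- Sequential composition is in general not associative: if A contains at least two distinct atoms, then there exist programs P, Q, R over A such that (P ∘ Q) ∘ R ≠ P ∘ (Q ∘ R). -/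
section Rename

variable {A B : Type*}

def Rule.map (e : A ↪ B) : Rule A ↪ Rule B :=
  e.prodMap (Finset.mapEmbedding e).toEmbedding

@[simp]
theorem Rule.map_apply (e : A ↪ B) (r : Rule A) : Rule.map e r = (e r.1, r.2.map e) := rfl

variable [DecidableEq A] [DecidableEq B]

theorem heads_map (e : A ↪ B) (S : Finset (Rule A)) :
    heads (S.map (Rule.map e)) = (heads S).map e := by
  simp only [heads, Finset.map_eq_image, Finset.image_image]
  rfl

theorem bodies_map (e : A ↪ B) (S : Finset (Rule A)) :
    bodies (S.map (Rule.map e)) = (bodies S).map e := by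
  simp [bodies, Finset.map_eq_image, Finset.image_biUnion, Finset.biUnion_image]

theorem mem_comp {P R : Finset (Rule A)} {x : Rule A} :
    x ∈ comp P R ↔ ∃ r ∈ P, ∃ S ⊆ R, S.card ≤ r.2.card ∧ heads S = r.2 ∧
      (r.1, bodies S) = x := by
  simp [comp, and_assoc]

theorem comp_map_map (e : A ↪ B) (P R : Finset (Rule A)) :
    comp (P.map (Rule.map e)) (R.map (Rule.map e)) = (comp P R).map (Rule.map e) := by
  ext x
  simp only [mem_comp, Finset.mem_map, Finset.subset_map_iff]
  constructor
  · rintro ⟨_, ⟨r, hr, rfl⟩, _, ⟨S, hSR, rfl⟩, hcard, hheads, rfl⟩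
    rw [heads_map, Rule.map_apply, Finset.map_inj] at hheads
    refine ⟨(r.1, bodies S), ⟨r, hr, S, hSR, ?_, hheads, rfl⟩, ?_⟩
    · simpa using hcard
    · simp [bodies_map]
  · rintro ⟨_, ⟨r, hr, S, hSR, hcard, hheads, rfl⟩, rfl⟩
    refine ⟨_, ⟨r, hr, rfl⟩, _, ⟨S, hSR, rfl⟩, ?_, ?_, ?_⟩
    · simpa using hcard
    · simp [heads_map, hheads]
    · simp [bodies_map]

end Rename

theorem comp_not_assoc_fin_two :
    ∃ P Q R : Finset (Rule (Fin 2)), comp (comp P Q) R ≠ comp P (comp Q R) :=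
  ⟨{(0, {0, 1})}, {(0, {0}), (1, {0})}, {(0, {0}), (0, {1})}, by decide⟩

theorem comp_not_assoc_general {A : Type*} [DecidableEq A]
    (h : ∃ a b : A, a ≠ b) :
    ∃ P Q R : Finset (Rule A), comp (comp P Q) R ≠ comp P (comp Q R) := by
  obtain ⟨a, b, hab⟩ := h
  obtain ⟨P, Q, R, hPQR⟩ := comp_not_assoc_fin_two
  let e := Rule.map (Function.Embedding.embFinTwo hab)
  refine ⟨P.map e, Q.map e, R.map e, ?_⟩
  simpa only [e, comp_map_map, ne_eq, Finset.map_inj] using hPQR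

/-- Sequential composition is in general not associative: if `A` contains at least two
distinct atoms, then there are programs `P, Q, R` with `(P ∘ Q) ∘ R ≠ P ∘ (Q ∘ R)`. -/
theorem comp_not_assoc {A : Type*} [DecidableEq A] [Fintype A]
    (h : ∃ a b : A, a ≠ b) :
    ∃ P Q R : Finset (Rule A), comp (comp P Q) R ≠ comp P (comp Q R) :=
  comp_not_assoc_general h
end

section
/- Composition simulates the van Emden-Kowalski operator and interpretations are left zeros up to themselves: for every program P and interpretation I (identified with the program { a ← ∅ : a ∈ I }), P ∘ I = T_P(I) and I ∘ P = I. -/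
/-- The interpretation `I ⊆ A` identified with the fact program `{ a ← ∅ : a ∈ I }`. -/
def interp {A : Type*} [DecidableEq A] (I : Finset A) : Finset (Rule A) :=
  I.image fun a => (a, (∅ : Finset A))

/-- The van Emden-Kowalski operator: `T_P(I) = { h(r) : r ∈ P, b(r) ⊆ I }`. -/
def vEK {A : Type*} [DecidableEq A] (P : Finset (Rule A)) (I : Finset A) : Finset A :=
  (P.filter fun r => r.2 ⊆ I).image Prod.fst

lemma subset_interp_eq {A : Type*} [DecidableEq A] {I : Finset A} {S : Finset (Rule A)}
    (hS : S ⊆ interp I) : S = interp (heads S) := by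
  ext x
  constructor
  · intro hx
    obtain ⟨a, _, ha⟩ := Finset.mem_image.mp (hS hx)
    subst ha
    exact Finset.mem_image.mpr ⟨a, Finset.mem_image.mpr ⟨(a, ∅), hx, rfl⟩, rfl⟩
  · intro hx
    obtain ⟨b, hb, hbx⟩ := Finset.mem_image.mp hx
    obtain ⟨s, hs, hsb⟩ := Finset.mem_image.mp hb
    obtain ⟨a, _, ha⟩ := Finset.mem_image.mp (hS hs)
    have : s = (b, ∅) := by
      rw [← hsb, ← ha]
    rw [← hbx, ← this]; exact hs

lemma heads_interp {A : Type*} [DecidableEq A] (J : Finset A) : heads (interp J) = J := by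
  ext a; simp [heads, interp]

lemma bodies_interp {A : Type*} [DecidableEq A] (J : Finset A) : bodies (interp J) = ∅ := by
  ext a; simp [bodies, interp]

lemma card_interp {A : Type*} [DecidableEq A] (J : Finset A) : (interp J).card = J.card :=
  Finset.card_image_of_injective _ (fun a b h => congrArg Prod.fst h)

/-- Composition simulates the van Emden-Kowalski operator, and interpretations are
left zeros up to themselves: `P ∘ I = T_P(I)` and `I ∘ P = I`. -/
theorem comp_interp {A : Type*} [DecidableEq A] [Fintype A]
    (P : Finset (Rule A)) (I : Finset A) :
    comp P (interp I) = interp (vEK P I) ∧ comp (interp I) P = interp I := by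
  constructor
  · ext x
    simp only [comp, Finset.mem_biUnion, Finset.mem_image, Finset.mem_filter,
      Finset.mem_powerset]
    constructor
    · rintro ⟨r, hr, S, ⟨hSI, _, hheads⟩, rfl⟩
      have hSeq := subset_interp_eq hSI
      have hb : bodies S = ∅ := by rw [hSeq, bodies_interp]
      have hsub : r.2 ⊆ I := by
        rw [← hheads]; intro a ha
        obtain ⟨s, hs, rfl⟩ := Finset.mem_image.mp ha
        obtain ⟨a', ha', h⟩ := Finset.mem_image.mp (hSI hs)
        rw [← h]; exact ha'
      rw [hb]
      have : r.1 ∈ vEK P I := Finset.mem_image.mpr ⟨r, Finset.mem_filter.mpr ⟨hr, hsub⟩, rfl⟩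
      exact Finset.mem_image.mpr ⟨r.1, this, rfl⟩
    · intro hx
      simp only [interp, Finset.mem_image] at hx
      obtain ⟨a, ha, rfl⟩ := hx
      simp only [vEK, Finset.mem_image, Finset.mem_filter, Prod.exists] at ha
      obtain ⟨h, B, ⟨hP, hBI⟩, rfl⟩ := ha
      refine ⟨(h, B), hP, interp B, ⟨?_, ?_, ?_⟩, ?_⟩
      · simp only [interp]; exact Finset.image_subset_image hBI
      · simp [card_interp]
      · exact heads_interp B
      · rw [bodies_interp]
  · ext x
    simp only [comp, Finset.mem_biUnion, Finset.mem_image, Finset.mem_filter,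
      Finset.mem_powerset]
    constructor
    · rintro ⟨r, hr, S, ⟨_, hcard, hheads⟩, rfl⟩
      simp only [interp, Finset.mem_image] at hr
      obtain ⟨a, ha, rfl⟩ := hr
      have : S = ∅ := Finset.card_eq_zero.mp (Nat.le_zero.mp (by simpa using hcard))
      subst this
      simp only [bodies, Finset.biUnion_empty]
      simp [interp, Finset.mem_image]
      exact ha
    · intro hx
      simp only [interp, Finset.mem_image] at hx
      obtain ⟨a, ha, rfl⟩ := hx
      refine ⟨(a, ∅), ?_, ∅, ⟨Finset.empty_subset _, by simp, by simp [heads]⟩, by simp [bodies]⟩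
      simp [interp, Finset.mem_image]; exact ha
end

section
/- Composing on the right with I^⊖ deletes the atoms of I from all rule bodies: for every program P and interpretation I, P ∘ I^⊖ = { h(r) ← (b(r) \ I) : r ∈ P }. -/
/-- `I^⊖ = { a ← {a} : a ∈ A \ I } ∪ { a ← ∅ : a ∈ I }`. -/
def ominus {A : Type*} [DecidableEq A] [Fintype A] (I : Finset A) : Finset (Rule A) :=
  ((Finset.univ \ I).image fun a => (a, ({a} : Finset A))) ∪
    (I.image fun a => (a, (∅ : Finset A)))

/-- Composing on the right with `I^⊖` deletes the atoms of `I` from all rule bodies: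
`P ∘ I^⊖ = { h(r) ← (b(r) \ I) : r ∈ P }`. -/
theorem comp_ominus {A : Type*} [DecidableEq A] [Fintype A]
    (P : Finset (Rule A)) (I : Finset A) :
    comp P (ominus I) = P.image fun r => (r.1, r.2 \ I) := by
  classical
  set f : A → Rule A := fun a => if a ∈ I then (a, (∅ : Finset A)) else (a, {a}) with hf
  have hmem : ∀ s : Rule A, s ∈ ominus I ↔ s = f s.1 := by
    intro s
    simp only [ominus, Finset.mem_union, Finset.mem_image, Finset.mem_sdiff, Finset.mem_univ,
      true_and, hf]
    constructor
    · rintro (⟨a, ha, rfl⟩ | ⟨a, ha, rfl⟩) <;> simp [ha]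
    · intro h
      by_cases ha : s.1 ∈ I
      · right; exact ⟨s.1, ha, by simp [ha] at h; rw [h]⟩
      · left; exact ⟨s.1, ha, by simp [ha] at h; rw [h]⟩
  have hfst : ∀ a, (f a).1 = a := by intro a; by_cases h : a ∈ I <;> simp [hf, h]
  have hbodies : ∀ B : Finset A, bodies (B.image f) = B \ I := by
    intro B
    ext b
    simp only [bodies, Finset.mem_biUnion, Finset.mem_image, Finset.mem_sdiff]
    constructor
    · rintro ⟨s, ⟨a, ha, rfl⟩, hb⟩
      by_cases h : a ∈ I <;> simp [hf, h] at hb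
      subst hb; exact ⟨ha, h⟩
    · rintro ⟨hb, hbI⟩
      exact ⟨f b, ⟨b, hb, rfl⟩, by simp [hf, hbI]⟩
  ext x
  simp only [comp, Finset.mem_biUnion, Finset.mem_image, Finset.mem_filter,
    Finset.mem_powerset]
  constructor
  · rintro ⟨r, hr, S, ⟨hSsub, hcard, hheads⟩, rfl⟩
    refine ⟨r, hr, ?_⟩
    have hS : S = r.2.image f := by
      apply Finset.Subset.antisymm
      · intro s hs
        have h1 : s = f s.1 := (hmem s).1 (hSsub hs)
        have h2 : s.1 ∈ r.2 := by
          rw [← hheads]; exact Finset.mem_image.2 ⟨s, hs, rfl⟩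
        exact Finset.mem_image.2 ⟨s.1, h2, h1.symm⟩
      · intro s hs
        obtain ⟨a, ha, rfl⟩ := Finset.mem_image.1 hs
        rw [← hheads] at ha
        obtain ⟨t, ht, rfl⟩ := Finset.mem_image.1 ha
        rw [← (hmem t).1 (hSsub ht)]; exact ht
    rw [hS, hbodies]
  · rintro ⟨r, hr, rfl⟩
    refine ⟨r, hr, r.2.image f, ⟨?_, Finset.card_image_le, ?_⟩, ?_⟩
    · intro s hs
      obtain ⟨a, ha, rfl⟩ := Finset.mem_image.1 hs
      exact (hmem _).2 (by rw [hfst])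
    · ext a
      simp only [heads, Finset.mem_image]
      constructor
      · rintro ⟨s, ⟨b, hb, rfl⟩, rfl⟩
        rwa [hfst]
      · intro ha
        exact ⟨f a, ⟨a, ha, rfl⟩, hfst a⟩
    · rw [hbodies]
end

section
/- Composing on the right with I^⊕ adds the atoms of I to the bodies of all proper rules: for every program P and interpretation I, P ∘ I^⊕ = f(P) ∪ { h(r) ← (b(r) ∪ I) : r ∈ p(P) }. -/
/-- The facts (rules with empty body) `f(P)` of a program. -/
def factsOf {A : Type*} [DecidableEq A] (P : Finset (Rule A)) : Finset (Rule A) :=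
  P.filter fun r => r.2 = ∅

/-- The proper rules (rules with nonempty body) `p(P)` of a program. -/
def properOf {A : Type*} [DecidableEq A] (P : Finset (Rule A)) : Finset (Rule A) :=
  P.filter fun r => r.2 ≠ ∅

/-- `I^⊕ = { a ← ({a} ∪ I) : a ∈ A }`. -/
def oplus {A : Type*} [DecidableEq A] [Fintype A] (I : Finset A) : Finset (Rule A) :=
  Finset.univ.image fun a => (a, insert a I)

lemma mem_oplus {A : Type*} [DecidableEq A] [Fintype A] {I : Finset A} {s : Rule A} :
    s ∈ oplus I ↔ s.2 = insert s.1 I := by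
  simp only [oplus, Finset.mem_image, Finset.mem_univ, true_and]
  constructor
  · rintro ⟨a, rfl⟩; rfl
  · intro h; exact ⟨s.1, Prod.ext rfl h.symm⟩

lemma biUnion_insert_eq {A : Type*} [DecidableEq A] {B I : Finset A} (hB : B.Nonempty) :
    B.biUnion (fun a => insert a I) = B ∪ I := by
  ext x
  simp only [Finset.mem_biUnion, Finset.mem_insert, Finset.mem_union]
  constructor
  · rintro ⟨a, ha, rfl | hx⟩
    · exact Or.inl ha
    · exact Or.inr hx
  · rintro (hx | hx)
    · exact ⟨x, hx, Or.inl rfl⟩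
    · obtain ⟨a, ha⟩ := hB; exact ⟨a, ha, Or.inr hx⟩

/-- Composing on the right with `I^⊕` adds the atoms of `I` to the bodies of all proper
rules: `P ∘ I^⊕ = f(P) ∪ { h(r) ← (b(r) ∪ I) : r ∈ p(P) }`. -/
theorem comp_oplus {A : Type*} [DecidableEq A] [Fintype A]
    (P : Finset (Rule A)) (I : Finset A) :
    comp P (oplus I) = factsOf P ∪ (properOf P).image fun r => (r.1, r.2 ∪ I) := by
  ext ⟨h, B⟩
  simp only [comp, Finset.mem_biUnion, Finset.mem_image, Finset.mem_filter,
    Finset.mem_powerset, Finset.mem_union, factsOf, properOf, Prod.mk.injEq]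
  constructor
  · rintro ⟨r, hr, S, ⟨hS, hcard, hheads⟩, rfl, rfl⟩
    have hSdesc : ∀ s ∈ S, s.2 = insert s.1 I := fun s hs => mem_oplus.mp (hS hs)
    by_cases hB : r.2 = (∅ : Finset A)
    · left
      have hS0 : S = ∅ := by
        rw [hB] at hheads
        exact Finset.image_eq_empty.mp hheads
      subst hS0
      have hb : bodies (∅ : Finset (Rule A)) = r.2 := by simp [bodies, hB]
      exact ⟨by simpa [hb] using hr, by simp [bodies]⟩
    · right
      refine ⟨r, ⟨hr, hB⟩, rfl, ?_⟩
      symm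
      have hSne : S.Nonempty := by
        rcases Finset.eq_empty_or_nonempty S with h0 | h0
        · exfalso; apply hB; rw [← hheads, h0]; simp [heads]
        · exact h0
      have : bodies S = S.biUnion (fun s => insert s.1 I) := by
        apply Finset.biUnion_congr rfl
        intro s hs; rw [hSdesc s hs]
      rw [this]
      ext x
      simp only [Finset.mem_biUnion, Finset.mem_insert, Finset.mem_union]
      constructor
      · rintro ⟨s, hs, rfl | hx⟩
        · left; rw [← hheads]; exact Finset.mem_image_of_mem _ hs
        · exact Or.inr hx
      · rintro (hx | hx)
        · rw [← hheads] at hx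
          obtain ⟨s, hs, rfl⟩ := Finset.mem_image.mp hx
          exact ⟨s, hs, Or.inl rfl⟩
        · obtain ⟨s, hs⟩ := hSne; exact ⟨s, hs, Or.inr hx⟩
  · rintro (⟨hP, rfl⟩ | ⟨r, ⟨hr, hne⟩, rfl, rfl⟩)
    · exact ⟨(h, ∅), hP, ∅, ⟨by simp, by simp, by simp [heads]⟩, rfl, by simp [bodies]⟩
    · refine ⟨r, hr, r.2.image (fun a => (a, insert a I)), ⟨?_, ?_, ?_⟩, rfl, ?_⟩
      · intro s hs
        obtain ⟨a, _, rfl⟩ := Finset.mem_image.mp hs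
        exact mem_oplus.mpr rfl
      · exact Finset.card_image_le
      · rw [heads, Finset.image_image]; exact Finset.image_id
      · symm
        have : bodies (r.2.image (fun a => (a, insert a I))) = r.2.biUnion (fun a => insert a I) := by
          ext x
          simp [bodies]
        rw [this, biUnion_insert_eq (Finset.nonempty_iff_ne_empty.mpr hne)]
end

section
/- For distinct atoms a, b ∈ A, the fact program {a ← ∅} is strictly below the rule program {a ← {b}} in the R-preorder: {a ← ∅} ≤_R {a ← {b}} but {a ← {b}} ≰_R {a ← ∅}. Moreover, any two singleton programs consisting of proper rules with the same head are R-equivalent: for atoms a₀, a₁, …, a_k ∈ A with k ≥ 1, {a₀ ← {a₁}} ≡_R {a₀ ← {a₁,…,a_k}}. -/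
/-- Green's `R`-preorder: `P ≤_R R` iff `P = R ∘ S` for some program `S`. -/
def leR {A : Type*} [DecidableEq A] (P R : Finset (Rule A)) : Prop :=
  ∃ S, P = comp R S

lemma comp_single {A : Type*} [DecidableEq A] (r s : Rule A)
    (hcard : 1 ≤ r.2.card) (hhd : ({s.1} : Finset A) = r.2) :
    comp {r} {s} = {(r.1, s.2)} := by
  have hfilter : (({s} : Finset (Rule A)).powerset.filter
      fun S => S.card ≤ r.2.card ∧ heads S = r.2) = {({s} : Finset (Rule A))} := by
    ext S'
    simp only [Finset.mem_filter, Finset.mem_powerset, Finset.mem_singleton,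
      Finset.subset_singleton_iff]
    constructor
    · rintro ⟨(rfl | rfl), _, hS⟩
      · exfalso
        have : r.2.Nonempty := Finset.card_pos.mp hcard
        simp [heads] at hS
        exact this.ne_empty hS.symm
      · rfl
    · rintro rfl
      refine ⟨Or.inr rfl, ?_, ?_⟩
      · simpa using hcard
      · simp [heads, hhd]
  simp only [comp, Finset.singleton_biUnion, hfilter, Finset.image_singleton]
  simp [bodies]

/-- For distinct atoms `a ≠ b`, the fact program `{a ← ∅}` is strictly below
`{a ← {b}}` in the `R`-preorder; moreover any two singleton programs of proper rules
with the same head are `R`-equivalent: for a head `a₀` and a body `B = {a₁, …, a_k}`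
(`k ≥ 1`, i.e. `a₁ ∈ B`), `{a₀ ← {a₁}} ≡_R {a₀ ← B}`. -/
theorem R_facts_below_rules_and_proper_rules_equiv {A : Type*} [DecidableEq A] [Fintype A]
    {a b : A} (hab : a ≠ b) (a₀ a₁ : A) (B : Finset A) (h₁ : a₁ ∈ B) :
    leR {(a, (∅ : Finset A))} {(a, ({b} : Finset A))} ∧
    ¬ leR {(a, ({b} : Finset A))} {(a, (∅ : Finset A))} ∧
    (leR {(a₀, ({a₁} : Finset A))} {(a₀, B)} ∧ leR {(a₀, B)} {(a₀, ({a₁} : Finset A))}) := by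
  refine ⟨?_, ?_, ?_, ?_⟩
  · exact ⟨{(b, (∅ : Finset A))},
      (comp_single (a, ({b} : Finset A)) (b, (∅ : Finset A)) (by simp) (by simp)).symm⟩
  · rintro ⟨S, hS⟩
    have hmem : ((a, ({b} : Finset A)) : Rule A) ∈ comp {(a, (∅ : Finset A))} S := by
      rw [← hS]; exact Finset.mem_singleton_self _
    simp only [comp, Finset.singleton_biUnion, Finset.mem_image, Finset.mem_filter,
      Finset.card_empty, Nat.le_zero, Finset.card_eq_zero] at hmem
    obtain ⟨S', ⟨_, hcard, _⟩, heq⟩ := hmem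
    subst hcard
    simp only [bodies, Finset.biUnion_empty, Prod.mk.injEq] at heq
    exact (Finset.singleton_ne_empty b) heq.2.symm
  · -- {a₀ ← {a₁}} ≤ {a₀ ← B}
    refine ⟨B.image (fun x => (x, ({a₁} : Finset A))), ?_⟩
    set S : Finset (Rule A) := B.image (fun x => (x, ({a₁} : Finset A))) with hSdef
    have hheadsS : heads S = B := by
      ext x; simp [heads, hSdef]
    have hbodiesS : bodies S = {a₁} := by
      ext y
      simp only [bodies, Finset.mem_biUnion, hSdef, Finset.mem_image, Finset.mem_singleton]
      constructor
      · rintro ⟨r, ⟨x, _, rfl⟩, hy⟩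
        simpa using hy
      · intro hy
        exact ⟨(a₁, {a₁}), ⟨a₁, h₁, rfl⟩, by simp [hy]⟩
    have hfilter : (S.powerset.filter fun S' => S'.card ≤ B.card ∧ heads S' = B) = {S} := by
      ext S'
      simp only [Finset.mem_filter, Finset.mem_powerset, Finset.mem_singleton]
      constructor
      · rintro ⟨hsub, _, hh⟩
        refine Finset.Subset.antisymm hsub (fun r hr => ?_)
        simp only [hSdef, Finset.mem_image] at hr
        obtain ⟨x, hx, rfl⟩ := hr
        have hx' : x ∈ heads S' := hh ▸ hx
        simp only [heads, Finset.mem_image] at hx'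
        obtain ⟨r, hr', hr1⟩ := hx'
        have hrS : r ∈ S := hsub hr'
        simp only [hSdef, Finset.mem_image] at hrS
        obtain ⟨y, _, rfl⟩ := hrS
        simp only at hr1
        subst hr1
        exact hr'
      · rintro rfl
        exact ⟨Finset.Subset.refl _, by simpa [hSdef] using Finset.card_image_le, hheadsS⟩
    simp only [comp, Finset.singleton_biUnion, hfilter, Finset.image_singleton, hbodiesS]
  · -- {a₀ ← B} ≤ {a₀ ← {a₁}}
    exact ⟨{(a₁, B)},
      (comp_single (a₀, ({a₁} : Finset A)) (a₁, B) (by simp) (by simp)).symm⟩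
end
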